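/- arXiv:2011.14895 — 4 statements merged into one kernel-verified Lean document; each statement's English description precedes it below -/
import Mathlib

section
/- For every input x ∈ ℝ^{n_0}, the set of activation patterns compatible with the hyperplane pattern at x equals the set of activation patterns compatible with their own induced subjective hyperplane pattern at x, i.e. S^C(x) = S̃^C(x). -/
/-!
Formalization of the setting of "Deep ReLU Programming" (Hinz & van de Geer).

A feed-forward ReLU network with `L` hidden layers and widths `n 0, …, n (L+1)`
(`n (L+1) = 1` for a real-valued network) is encoded by the structure `Net L n`
below, where `W k : Matrix (Fin (n (k+1))) (Fin (n k)) ℝ` and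
`b k : Fin (n (k+1)) → ℝ` are the weight matrix and bias vector of layer `k+1`
(so the paper's `W_l, b_l` correspond to `W (l-1), b (l-1)` here).

A neuron `(l, j)` of the paper (layer `l ∈ {1, …, L}`, neuron `j`) is encoded as
the pair `⟨k, j⟩ : Idx n` with `k = l - 1`; membership in the index set `I`
corresponds to the condition `k < L`.
-/

noncomputable section
open Metric Filter Topology
open scoped Classical RealInnerProductSpace BigOperators

namespace DRLP

/-- Input space `ℝ^{n 0}` with the Euclidean metric and inner product. -/
abbrev Input (n : ℕ → ℕ) := EuclideanSpace ℝ (Fin (n 0))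

/-- Patterns: one real number for each neuron `⟨k, j⟩` (neuron `j` of layer `k+1`). -/
abbrev Pat (n : ℕ → ℕ) := ∀ k : ℕ, Fin (n (k+1)) → ℝ

/-- Neuron indices: `⟨k, j⟩` denotes neuron `j` of layer `k+1`. -/
abbrev Idx (n : ℕ → ℕ) := Σ k : ℕ, Fin (n (k+1))

/-- `s` is an activation pattern (element of `S = {0,1}^{n_1} × ⋯ × {0,1}^{n_L}`). -/
def IsPattern (L : ℕ) {n : ℕ → ℕ} (s : Pat n) : Prop :=
  ∀ k < L, ∀ j, s k j = 0 ∨ s k j = 1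

/-- Compatibility of a (hyperplane) pattern `h` with an activation pattern `s`:
`h_{lj} (s_{lj} - 0.5) ≥ 0` for all neurons `(l,j) ∈ I`. -/
def PatCompatible (L : ℕ) {n : ℕ → ℕ} (h s : Pat n) : Prop :=
  ∀ k < L, ∀ j, h k j * (s k j - 1/2) ≥ 0

/-- A feed-forward ReLU network with `L` hidden layers and widths `n 0, …, n (L+1)`. -/
structure Net (L : ℕ) (n : ℕ → ℕ) : Type where
  W : ∀ k : ℕ, Matrix (Fin (n (k+1))) (Fin (n k)) ℝ
  b : ∀ k : ℕ, Fin (n (k+1)) → ℝ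

namespace Net

variable {L : ℕ} {n : ℕ → ℕ} (N : Net L n)

/-- Output of layer `k` (entrywise ReLU applied); layer `0` is the input itself. -/
def hid (x : Input n) : (k : ℕ) → Fin (n k) → ℝ
  | 0 => fun i => x i
  | k + 1 => fun j => max ((N.W k).mulVec (hid x k) j + N.b k j) 0

/-- The ReLU arguments `A(x)`: pre-activation of neuron `j` in layer `k+1`. -/
def preact (x : Input n) (k : ℕ) (j : Fin (n (k+1))) : ℝ :=
  (N.W k).mulVec (N.hid x k) j + N.b k j

/-- The hyperplane pattern `H(x) = sign.(A(x))`. -/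
def Hpat (x : Input n) (k : ℕ) (j : Fin (n (k+1))) : ℝ :=
  Real.sign (N.preact x k j)

/-- Subjective hidden layers: activations frozen to the pattern `s`. -/
def shid (s : Pat n) (x : Input n) : (k : ℕ) → Fin (n k) → ℝ
  | 0 => fun i => x i
  | k + 1 => fun j => s k j * ((N.W k).mulVec (shid s x k) j + N.b k j)

/-- The subjective ReLU arguments `Ã_s(x)`. -/
def spreact (s : Pat n) (x : Input n) (k : ℕ) (j : Fin (n (k+1))) : ℝ :=
  (N.W k).mulVec (N.shid s x k) j + N.b k j

/-- The subjective hyperplane pattern `H̃_s(x) = sign.(Ã_s(x))`. -/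
def sHpat (s : Pat n) (x : Input n) (k : ℕ) (j : Fin (n (k+1))) : ℝ :=
  Real.sign (N.spreact s x k j)

/-- `S^C(x)`: activation patterns compatible with the hyperplane pattern `H(x)`. -/
def SC (x : Input n) : Set (Pat n) :=
  {s | IsPattern L s ∧ PatCompatible L (N.Hpat x) s}

/-- `S̃^C(x)`: activation patterns compatible with their own induced subjective
hyperplane pattern `H̃_s(x)`. -/
def SCtilde (x : Input n) : Set (Pat n) :=
  {s | IsPattern L s ∧ PatCompatible L (N.sHpat s x) s}

/-- `C(x)`: critical indices, i.e. neurons whose hyperplane pattern is non-constant in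
every neighbourhood of `x`. -/
def Critical (x : Input n) (p : Idx n) : Prop :=
  p.1 < L ∧ ∀ ε > 0, ∃ y z : Input n, dist y x < ε ∧ dist z x < ε ∧
    N.Hpat y p.1 p.2 ≠ N.Hpat z p.1 p.2

/-- `C̃_s(x)`: subjective critical indices. -/
def sCritical (s : Pat n) (x : Input n) (p : Idx n) : Prop :=
  p.1 < L ∧ ∀ ε > 0, ∃ y z : Input n, dist y x < ε ∧ dist z x < ε ∧
    N.sHpat s y p.1 p.2 ≠ N.sHpat s z p.1 p.2

/-- The critical kernel `Ker^C(x)`. -/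
def KerC (x : Input n) : Set (Input n) :=
  {v | ∃ ε > 0, ∀ t : ℝ, |t| < ε → ∀ p : Idx n, p.1 < L →
    N.Hpat (x + t • v) p.1 p.2 = N.Hpat x p.1 p.2}

/-- The subjective critical kernel `K̃er^C_s(x)`. -/
def sKerC (s : Pat n) (x : Input n) : Set (Input n) :=
  {v | ∃ ε > 0, ∀ t : ℝ, |t| < ε → ∀ p : Idx n, p.1 < L →
    N.sHpat s (x + t • v) p.1 p.2 = N.sHpat s x p.1 p.2}

/-- Critical degrees of freedom `df^C(x) = dim Ker^C(x)`. -/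
def dfC (x : Input n) : ℕ :=
  Module.finrank ℝ (Submodule.span ℝ (N.KerC x))

/-- `x` is a vertex iff `df^C(x) = 0`. -/
def IsVertex (x : Input n) : Prop := N.dfC x = 0

/-- The matrix `W_{k+1} diag(s_k) W_k ⋯ diag(s_1) W_1`. -/
def sMat (s : Pat n) : (k : ℕ) → Matrix (Fin (n (k+1))) (Fin (n 0)) ℝ
  | 0 => N.W 0
  | k + 1 => N.W (k+1) * Matrix.diagonal (s k) * sMat s k

/-- The normal vector `ṽ_{s,l,j}` (transpose of the `j`-th row of
`W_l diag(s_{l-1}) ⋯ diag(s_1) W_1`). -/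
def nvec (s : Pat n) (p : Idx n) : Input n :=
  WithLp.toLp 2 (fun i => N.sMat s p.1 p.2 i)

/-- The oriented normal vector `ũ_{s,l,j}`. -/
def onvec (s : Pat n) (p : Idx n) : Input n :=
  if s p.1 p.2 = 1 then N.nvec s p else -N.nvec s p

/-- The gradient `∇_s = (W_{L+1} diag(s_L) ⋯ diag(s_1) W_1)ᵀ ∈ ℝ^{n_0}`. -/
def grad (h1 : n (L+1) = 1) (s : Pat n) : Input n :=
  N.nvec s ⟨L, Fin.cast h1.symm 0⟩

/-- The (real-valued) network function `f`. -/
def fnet (h1 : n (L+1) = 1) (x : Input n) : ℝ :=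
  N.preact x L (Fin.cast h1.symm 0)

/-- The subjective network function `f̃_s`. -/
def sfnet (h1 : n (L+1) = 1) (s : Pat n) (x : Input n) : ℝ :=
  N.spreact s x L (Fin.cast h1.symm 0)

/-- The feasible directions `D̃_s(x)`. -/
def Dfeas (s : Pat n) (x : Input n) : Set (Input n) :=
  {v | ∃ ε > 0, s ∈ N.SC (x + ε • v)}

/-- `x` is a regular point: for every compatible activation pattern `s ∈ S^C(x)`, the
normal vectors at the subjective critical indices are linearly independent. -/
def RegularPoint (x : Input n) : Prop :=
  ∀ s ∈ N.SC x, LinearIndependent ℝ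
    (fun p : {p : Idx n // N.sCritical s x p} => N.nvec s p.1)

/-- The network is regular if every point is a regular point. -/
def Regular : Prop := ∀ x : Input n, N.RegularPoint x

/-- `w` is the feasible axis `ã_{x,s,l,j}` at `x` for the activation pattern `s` and the
critical index `p = (l,j)`: it pairs to `1` with the oriented normal vector of `p` and
to `0` with the oriented normal vectors of all other critical indices of `x`. -/
def IsAxis (x : Input n) (s : Pat n) (p : Idx n) (w : Input n) : Prop :=
  ∀ q : Idx n, N.Critical x q → ⟪w, N.onvec s q⟫ = if p = q then 1 else 0

/-- The region separating axes `𝒜(x)`. -/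
def RegionSepAxes (x : Input n) : Set (Input n) :=
  {w | ∃ s ∈ N.SC x, ∃ p : Idx n, N.Critical x p ∧ N.IsAxis x s p w}

end Net

/-
For an activation pattern `s ∈ {0,1}` compatible with the sign of `a`, `s * a = ReLU a`. Hence,
as long as `s` is compatible with the pre-activations, the subjective forward pass under `s`
reproduces the true one layer by layer, so the subjective and true hyperplane patterns coincide.
This runs by induction on the layers from either compatibility assumption, because at each layer
the induction hypothesis already identifies the two patterns there.
-/

theorem mul_eq_max_zero_of_sign_mul_nonneg {s a : ℝ} (hs : s = 0 ∨ s = 1)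
    (h : Real.sign a * (s - 1/2) ≥ 0) : s * a = max a 0 := by
  rcases hs with rfl | rfl
  · have ha : a ≤ 0 := by
      by_contra! ha
      rw [Real.sign_of_pos ha] at h
      norm_num at h
    simp [ha]
  · have ha : 0 ≤ a := by
      by_contra! ha
      rw [Real.sign_of_neg ha] at h
      norm_num at h
    simp [ha]

namespace Net

variable {L : ℕ} {n : ℕ → ℕ} (N : Net L n) {s : Pat n} {x : Input n}

theorem sHpat_eq_Hpat {k : ℕ} (h : N.shid s x k = N.hid x k) : N.sHpat s x k = N.Hpat x k := by
  funext j
  simp only [sHpat, Hpat, spreact, preact, h]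

theorem shid_eq_hid (hs : IsPattern L s)
    (hc : ∀ k < L, N.shid s x k = N.hid x k → ∀ j, N.Hpat x k j * (s k j - 1/2) ≥ 0) :
    ∀ k ≤ L, N.shid s x k = N.hid x k := by
  intro k hk
  induction k with
  | zero => rfl
  | succ k ih =>
    have hkL : k < L := hk
    have hprev := ih hkL.le
    funext j
    simp only [shid, hid, hprev]
    exact mul_eq_max_zero_of_sign_mul_nonneg (hs k hkL j) (hc k hkL hprev j)

end Net

/-- Theorem 1(1) of "Deep ReLU Programming": for every input `x`,
`S^C(x) = S̃^C(x)`. -/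
theorem statement0 {L : ℕ} {n : ℕ → ℕ} (N : Net L n) (x : Input n) :
    N.SC x = N.SCtilde x := by
  ext s
  refine and_congr_right fun hs => ⟨fun hc => ?_, fun hc => ?_⟩
  · have hagree := N.shid_eq_hid hs fun k hk _ => hc k hk
    intro k hk j
    rw [N.sHpat_eq_Hpat (hagree k hk.le)]
    exact hc k hk j
  · have hagree := N.shid_eq_hid hs fun k hk hprev => N.sHpat_eq_Hpat hprev ▸ hc k hk
    intro k hk j
    rw [← N.sHpat_eq_Hpat (hagree k hk.le)]
    exact hc k hk j

end DRLP
end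
end

section
/- For every x ∈ ℝ^{n_0} and every activation pattern s ∈ S, the subjective critical kernel equals the intersection of the solution sets of the linear equations given by the subjective critical indices: K̃er^C_s(x) = ⋂_{(l,j) ∈ C̃_s(x)} {v ∈ ℝ^{n_0} : Ã_s(x+v)_{lj} = 0}. -/
/-!
Formalization of the setting of "Deep ReLU Programming" (Hinz & van de Geer).

A feed-forward ReLU network with `L` hidden layers and widths `n 0, …, n (L+1)`
(`n (L+1) = 1` for a real-valued network) is encoded by the structure `Net L n`
below, where `W k : Matrix (Fin (n (k+1))) (Fin (n k)) ℝ` and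
`b k : Fin (n (k+1)) → ℝ` are the weight matrix and bias vector of layer `k+1`
(so the paper's `W_l, b_l` correspond to `W (l-1), b (l-1)` here).

A neuron `(l, j)` of the paper (layer `l ∈ {1, …, L}`, neuron `j`) is encoded as
the pair `⟨k, j⟩ : Idx n` with `k = l - 1`; membership in the index set `I`
corresponds to the condition `k < L`.
-/

noncomputable section
open Metric Filter Topology
open scoped Classical RealInnerProductSpace BigOperators

namespace DRLP

/-!
With the activation pattern `s` frozen, every subjective argument `Ã_s` is an affine function
of the input. At a subjective critical index it must vanish at `x` (otherwise its sign would be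
locally constant by continuity), hence along the line `t ↦ x + t • v` it equals
`t · Ã_s(x + v)`, whose sign is constant near `t = 0` iff `Ã_s(x + v) = 0`. At the finitely many
non-critical indices the sign is locally constant around `x` anyway.
-/

theorem forall_pos_exists_dist_lt_ne_iff {X β : Type*} [PseudoMetricSpace X] {g : X → β}
    {x : X} :
    (∀ ε > 0, ∃ y z : X, dist y x < ε ∧ dist z x < ε ∧ g y ≠ g z) ↔
      ¬ ∀ᶠ y in 𝓝 x, g y = g x := by
  rw [Metric.eventually_nhds_iff]
  push Not
  refine forall₂_congr fun ε hε => ⟨fun ⟨y, z, hy, hz, hne⟩ => ?_,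
    fun ⟨y, hy, hne⟩ => ⟨y, x, hy, by simpa using hε, hne⟩⟩
  by_contra! hconst
  exact hne ((hconst y hy).trans (hconst z hz).symm)

theorem eventually_sign_eq_of_ne_zero {X : Type*} [TopologicalSpace X] {f : X → ℝ} {x : X}
    (hf : ContinuousAt f x) (hx : f x ≠ 0) :
    ∀ᶠ y in 𝓝 x, Real.sign (f y) = Real.sign (f x) := by
  rcases hx.lt_or_gt with hneg | hpos
  · filter_upwards [hf.eventually (gt_mem_nhds hneg)] with y hy
    rw [Real.sign_of_neg hy, Real.sign_of_neg hneg]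
  · filter_upwards [hf.eventually (lt_mem_nhds hpos)] with y hy
    rw [Real.sign_of_pos hy, Real.sign_of_pos hpos]

namespace Net

open Matrix

variable {L : ℕ} {n : ℕ → ℕ} (N : Net L n) (s : Pat n)

theorem spreact_succ (y : Input n) (k : ℕ) :
    N.spreact s y (k + 1) =
      N.W (k + 1) *ᵥ (diagonal (s k) *ᵥ N.spreact s y k) + N.b (k + 1) := by
  ext j
  simp only [spreact, shid, Pi.add_apply]
  congr 2
  funext i
  rw [mulVec_diagonal]
  rfl

theorem spreact_add (x v : Input n) (k : ℕ) :
    N.spreact s (x + v) k = N.spreact s x k + N.sMat s k *ᵥ ⇑v := by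
  induction k with
  | zero =>
    ext j
    change (N.W 0 *ᵥ (⇑x + ⇑v)) j + N.b 0 j = (N.W 0 *ᵥ ⇑x) j + N.b 0 j + (N.W 0 *ᵥ ⇑v) j
    rw [mulVec_add, Pi.add_apply]
    ring
  | succ k ih =>
    rw [spreact_succ, spreact_succ, ih, mulVec_add, mulVec_add, sMat,
      ← mulVec_mulVec, ← mulVec_mulVec]
    abel

theorem spreact_add_smul (x v : Input n) (t : ℝ) (k : ℕ) (j : Fin (n (k + 1))) :
    N.spreact s (x + t • v) k j = N.spreact s x k j + t * (N.sMat s k *ᵥ ⇑v) j := by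
  simp [spreact_add, mulVec_smul]

theorem continuous_spreact (k : ℕ) (j : Fin (n (k + 1))) :
    Continuous fun y : Input n => N.spreact s y k j := by
  have h (y : Input n) : N.spreact s y k j = N.spreact s 0 k j + (N.sMat s k *ᵥ ⇑y) j := by
    simpa using congrFun (N.spreact_add s 0 y k) j
  refine (continuous_const.add ?_).congr fun y => (h y).symm
  fun_prop

variable {s} {x : Input n} {p : Idx n}

theorem sCritical_iff (hp : p.1 < L) :
    N.sCritical s x p ↔ ¬ ∀ᶠ y in 𝓝 x, N.sHpat s y p.1 p.2 = N.sHpat s x p.1 p.2 := by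
  rw [sCritical, and_iff_right hp, forall_pos_exists_dist_lt_ne_iff]

theorem spreact_eq_zero_of_sCritical (hp : N.sCritical s x p) :
    N.spreact s x p.1 p.2 = 0 := by
  by_contra hne
  exact (N.sCritical_iff hp.1).1 hp
    (eventually_sign_eq_of_ne_zero (N.continuous_spreact s p.1 p.2).continuousAt hne)

theorem spreact_add_smul_of_sCritical (hp : N.sCritical s x p) (v : Input n) (t : ℝ) :
    N.spreact s (x + t • v) p.1 p.2 = t * N.spreact s (x + v) p.1 p.2 := by
  have hv : N.spreact s (x + v) p.1 p.2 = N.spreact s (x + (1 : ℝ) • v) p.1 p.2 := by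
    rw [one_smul]
  rw [hv, spreact_add_smul, spreact_add_smul, N.spreact_eq_zero_of_sCritical hp]
  ring

theorem mem_sKerC_iff {v : Input n} :
    v ∈ N.sKerC s x ↔ ∀ᶠ t : ℝ in 𝓝 0, ∀ p : Idx n, p.1 < L →
      N.sHpat s (x + t • v) p.1 p.2 = N.sHpat s x p.1 p.2 := by
  simp only [sKerC, Set.mem_ofPred_eq, Metric.eventually_nhds_iff, Real.dist_eq, sub_zero]

theorem spreact_add_eq_zero_of_mem_sKerC {v : Input n} (hv : v ∈ N.sKerC s x)
    (hp : N.sCritical s x p) : N.spreact s (x + v) p.1 p.2 = 0 := by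
  obtain ⟨t, ht, ht0⟩ := (((N.mem_sKerC_iff.1 hv).filter_mono nhdsWithin_le_nhds).and
    (self_mem_nhdsWithin : {t : ℝ | t ≠ 0} ∈ 𝓝[≠] 0)).exists
  have hsign := ht p hp.1
  rw [sHpat, sHpat, N.spreact_add_smul_of_sCritical hp, N.spreact_eq_zero_of_sCritical hp,
    Real.sign_zero, Real.sign_eq_zero_iff] at hsign
  exact (mul_eq_zero.1 hsign).resolve_left ht0

theorem eventually_sHpat_add_smul_eq {v : Input n}
    (hv : ∀ q, N.sCritical s x q → N.spreact s (x + v) q.1 q.2 = 0) (hp : p.1 < L) :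
    ∀ᶠ t : ℝ in 𝓝 0, N.sHpat s (x + t • v) p.1 p.2 = N.sHpat s x p.1 p.2 := by
  by_cases hcrit : N.sCritical s x p
  · refine .of_forall fun t => ?_
    rw [sHpat, sHpat, N.spreact_add_smul_of_sCritical hcrit, hv p hcrit, mul_zero,
      N.spreact_eq_zero_of_sCritical hcrit]
  · have hray : Tendsto (fun t : ℝ => x + t • v) (𝓝 0) (𝓝 x) :=
      (by fun_prop : Continuous fun t : ℝ => x + t • v).tendsto' 0 x (by simp)
    exact hray.eventually (not_not.1 ((N.sCritical_iff hp).not.1 hcrit))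

theorem mem_sKerC_of_forall_sCritical {v : Input n}
    (hv : ∀ q, N.sCritical s x q → N.spreact s (x + v) q.1 q.2 = 0) : v ∈ N.sKerC s x := by
  have hneuron (k : ℕ) (hk : k ∈ Finset.range L) (j : Fin (n (k + 1))) :=
    N.eventually_sHpat_add_smul_eq (p := ⟨k, j⟩) hv (Finset.mem_range.1 hk)
  rw [mem_sKerC_iff]
  filter_upwards [(eventually_all_finset _).2 fun k hk => eventually_all.2 (hneuron k hk)]
    with t ht p hp
  exact ht p.1 (Finset.mem_range.2 hp) p.2

end Net

theorem statement6_general {L : ℕ} {n : ℕ → ℕ} (N : Net L n) (x : Input n) (s : Pat n) :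
    N.sKerC s x =
      ⋂ p ∈ {p : Idx n | N.sCritical s x p},
        {v : Input n | N.spreact s (x + v) p.1 p.2 = 0} := by
  ext v
  simp only [Set.mem_iInter, Set.mem_ofPred_eq]
  exact ⟨fun hv p hp => N.spreact_add_eq_zero_of_mem_sKerC hv hp,
    N.mem_sKerC_of_forall_sCritical⟩

/-- Lemma 3: for every `x` and every activation pattern `s ∈ S`,
`K̃er^C_s(x) = ⋂_{(l,j) ∈ C̃_s(x)} {v : Ã_s(x+v)_{lj} = 0}`. -/
theorem statement6 {L : ℕ} {n : ℕ → ℕ} (N : Net L n) (x : Input n) (s : Pat n)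
    (hS : IsPattern L s) :
    N.sKerC s x =
      ⋂ p ∈ {p : Idx n | N.sCritical s x p},
        {v : Input n | N.spreact s (x + v) p.1 p.2 = 0} :=
  statement6_general N x s

end DRLP
end
end

section
/- For every x ∈ ℝ^{n_0}, every activation pattern s ∈ S and every subjective critical index (l,j) ∈ C̃_s(x), the normal vector is non-zero: ṽ_{s,l,j} ≠ 0. -/
/-!
Formalization of the setting of "Deep ReLU Programming" (Hinz & van de Geer).

A feed-forward ReLU network with `L` hidden layers and widths `n 0, …, n (L+1)`
(`n (L+1) = 1` for a real-valued network) is encoded by the structure `Net L n`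
below, where `W k : Matrix (Fin (n (k+1))) (Fin (n k)) ℝ` and
`b k : Fin (n (k+1)) → ℝ` are the weight matrix and bias vector of layer `k+1`
(so the paper's `W_l, b_l` correspond to `W (l-1), b (l-1)` here).

A neuron `(l, j)` of the paper (layer `l ∈ {1, …, L}`, neuron `j`) is encoded as
the pair `⟨k, j⟩ : Idx n` with `k = l - 1`; membership in the index set `I`
corresponds to the condition `k < L`.
-/

noncomputable section
open Metric Filter Topology
open scoped Classical RealInnerProductSpace BigOperators

namespace DRLP

namespace Net

variable {L : ℕ} {n : ℕ → ℕ} (N : Net L n)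

lemma exists_spreact_eq_sMat_mulVec_add (s : Pat n) (k : ℕ) :
    ∃ c : Fin (n (k+1)) → ℝ, ∀ y : Input n,
      N.spreact s y k = (N.sMat s k).mulVec (fun i => y i) + c := by
  induction k with
  | zero => exact ⟨N.b 0, fun y => rfl⟩
  | succ k ih =>
    obtain ⟨c, hc⟩ := ih
    refine ⟨(N.W (k+1)).mulVec ((Matrix.diagonal (s k)).mulVec c) + N.b (k+1), fun y => ?_⟩
    have hshid : N.shid s y (k+1) = (Matrix.diagonal (s k)).mulVec (N.spreact s y k) := by
      funext i
      rw [Matrix.mulVec_diagonal]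
      rfl
    change (N.W (k+1)).mulVec (N.shid s y (k+1)) + N.b (k+1) = _
    rw [hshid, hc, Matrix.mulVec_add, Matrix.mulVec_add, Matrix.mulVec_mulVec,
      Matrix.mulVec_mulVec]
    exact add_assoc _ _ _

lemma exists_spreact_eq_inner_nvec_add (s : Pat n) (p : Idx n) :
    ∃ c : ℝ, ∀ y : Input n, N.spreact s y p.1 p.2 = ⟪N.nvec s p, y⟫ + c := by
  obtain ⟨c, hc⟩ := N.exists_spreact_eq_sMat_mulVec_add s p.1
  refine ⟨c p.2, fun y => ?_⟩
  rw [hc]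
  simp [nvec, Matrix.mulVec, dotProduct, PiLp.inner_apply, mul_comm]

lemma sHpat_eq_of_nvec_eq_zero {s : Pat n} {p : Idx n} (hv : N.nvec s p = 0)
    (y z : Input n) : N.sHpat s y p.1 p.2 = N.sHpat s z p.1 p.2 := by
  obtain ⟨c, hc⟩ := N.exists_spreact_eq_inner_nvec_add s p
  simp only [sHpat, hc, hv, inner_zero_left]

end Net

theorem statement10_general {L : ℕ} {n : ℕ → ℕ} (N : Net L n) (x : Input n) (s : Pat n)
    (p : Idx n) (hp : N.sCritical s x p) :
    N.nvec s p ≠ 0 := by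
  intro hv
  obtain ⟨y, z, -, -, hne⟩ := hp.2 1 one_pos
  exact hne (N.sHpat_eq_of_nvec_eq_zero hv y z)

/-- Lemma 7: for every `x`, every activation pattern `s ∈ S` and every
subjective critical index `(l,j) ∈ C̃_s(x)`, the normal vector is non-zero: `ṽ_{s,l,j} ≠ 0`. -/
theorem statement10 {L : ℕ} {n : ℕ → ℕ} (N : Net L n) (x : Input n) (s : Pat n)
    (hS : IsPattern L s) (p : Idx n) (hp : N.sCritical s x p) :
    N.nvec s p ≠ 0 :=
  statement10_general N x s p hp

end DRLP
end
end

section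
/- Let x ∈ ℝ^{n_0} be a regular vertex. Then x is a local minimum of f, i.e. there exists ε>0 with f(x) = inf{f(y) : y ∈ B_ε(x)}, if and only if for every region separating axis a ∈ A(x) there exist s ∈ S^C(x) and (l,j) ∈ C̃_s(x) with a = ã_{x,s,l,j} and ⟨ã_{x,s,l,j}, ∇_s⟩ ≥ 0. -/
/-!
Formalization of the setting of "Deep ReLU Programming" (Hinz & van de Geer).

A feed-forward ReLU network with `L` hidden layers and widths `n 0, …, n (L+1)`
(`n (L+1) = 1` for a real-valued network) is encoded by the structure `Net L n`
below, where `W k : Matrix (Fin (n (k+1))) (Fin (n k)) ℝ` and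
`b k : Fin (n (k+1)) → ℝ` are the weight matrix and bias vector of layer `k+1`
(so the paper's `W_l, b_l` correspond to `W (l-1), b (l-1)` here).

A neuron `(l, j)` of the paper (layer `l ∈ {1, …, L}`, neuron `j`) is encoded as
the pair `⟨k, j⟩ : Idx n` with `k = l - 1`; membership in the index set `I`
corresponds to the condition `k < L`.
-/

noncomputable section
open Metric Filter Topology
open scoped Classical RealInnerProductSpace BigOperators

namespace DRLP

/-!
Near `x` the network is piecewise affine: on the closed activation region of any `s ∈ S^C(x)`,
`f y - f x = ⟪y - x, ∇_s⟫`. At a regular vertex the oriented critical normals of `s` form a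
basis of the input space whose dual basis consists of feasible axes, so near `x` the region of
`s` is the cone spanned by these axes. The slope `⟪a, ∇_s⟫` of `f` along an axis `a` is a
one-sided directional derivative, hence independent of `s`, and `x` is a local minimum iff all
these slopes are nonnegative.
-/

lemma max_eq_mul_of_compatible {a s : ℝ} (hs : s = 0 ∨ s = 1)
    (h : Real.sign a * (s - 1/2) ≥ 0) : max a 0 = s * a := by
  rcases hs with rfl | rfl <;> rcases lt_trichotomy a 0 with ha | rfl | ha
  · simp [ha.le]
  · simp
  · norm_num [Real.sign_of_pos ha] at h
  · norm_num [Real.sign_of_neg ha] at h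
  · simp
  · simp [ha.le]

lemma sign_mul_sub_half_nonneg {a s : ℝ} (hs : s = 0 ∨ s = 1)
    (h : 0 ≤ if s = 1 then a else -a) : Real.sign a * (s - 1/2) ≥ 0 := by
  rcases hs with rfl | rfl <;> rcases lt_trichotomy a 0 with ha | rfl | ha
  all_goals norm_num [Real.sign_of_pos, Real.sign_of_neg, *] at h ⊢
  all_goals linarith

lemma IsPattern.mono {k L : ℕ} {n : ℕ → ℕ} {s : Pat n} (h : IsPattern L s) (hk : k ≤ L) :
    IsPattern k s :=
  fun k' hk' => h k' (hk'.trans_le hk)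

lemma PatCompatible.mono {k L : ℕ} {n : ℕ → ℕ} {h s : Pat n} (hc : PatCompatible L h s)
    (hk : k ≤ L) : PatCompatible k h s :=
  fun k' hk' => hc k' (hk'.trans_le hk)

lemma finite_setOf_fst_lt (L : ℕ) (n : ℕ → ℕ) : {q : Idx n | q.1 < L}.Finite :=
  (Set.finite_range fun q : (Σ k : Fin L, Fin (n (k + 1))) => (⟨q.1, q.2⟩ : Idx n)).subset
    fun q hq => ⟨⟨⟨q.1, hq⟩, q.2⟩, rfl⟩

lemma eventually_forall_fst_lt {α : Type*} {l : Filter α} {L : ℕ} {n : ℕ → ℕ}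
    {P : Idx n → α → Prop} (h : ∀ q : Idx n, q.1 < L → ∀ᶠ a in l, P q a) :
    ∀ᶠ a in l, ∀ q : Idx n, q.1 < L → P q a :=
  (eventually_all_finite (finite_setOf_fst_lt L n)).mpr h

lemma isLocalMin_iff_exists_eq_sInf_image_ball {X : Type*} [PseudoMetricSpace X]
    [ProperSpace X] {f : X → ℝ} (hf : Continuous f) {x : X} :
    IsLocalMin f x ↔ ∃ ε > 0, f x = sInf (f '' ball x ε) := by
  rw [IsLocalMin, IsMinFilter, Metric.eventually_nhds_iff_ball]
  refine exists_congr fun ε => and_congr_right fun hε => ⟨fun hmin => ?_, fun hinf y hy => ?_⟩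
  · have hlb : f x ∈ lowerBounds (f '' ball x ε) := Set.forall_mem_image.mpr hmin
    exact le_antisymm (le_csInf ((nonempty_ball.mpr hε).image f) hlb)
      (csInf_le ⟨f x, hlb⟩ ⟨x, mem_ball_self hε, rfl⟩)
  · have hbdd : BddBelow (f '' ball x ε) :=
      ((isCompact_closedBall x ε).bddBelow_image hf.continuousOn).mono
        (Set.image_mono ball_subset_closedBall)
    exact hinf ▸ csInf_le hbdd ⟨y, hy, rfl⟩

lemma _root_.Module.Basis.exists_inner_dual {ι E : Type*} [Fintype ι] [DecidableEq ι]
    [NormedAddCommGroup E] [InnerProductSpace ℝ E] [FiniteDimensional ℝ E]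
    (b : Module.Basis ι ℝ E) :
    ∃ a : ι → E, (∀ i j, ⟪a i, b j⟫ = if j = i then 1 else 0) ∧
      ∀ u v, ⟪u, v⟫ = ∑ i, ⟪u, b i⟫ * ⟪a i, v⟫ := by
  let a i := (InnerProductSpace.toDual ℝ E).symm (LinearMap.toContinuousLinearMap (b.coord i))
  have ha : ∀ i v, ⟪a i, v⟫ = b.repr v i := fun i v => by
    rw [InnerProductSpace.toDual_symm_apply]; rfl
  refine ⟨a, fun i j => by rw [ha, b.repr_self, Finsupp.single_apply], fun u v => ?_⟩
  conv_lhs => rw [← b.sum_repr v]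
  simp only [inner_sum, real_inner_smul_right, ha, mul_comm]

lemma tendsto_add_smul {E : Type*} [TopologicalSpace E] [AddCommGroup E] [Module ℝ E]
    [ContinuousAdd E] [ContinuousSMul ℝ E] (x w : E) :
    Tendsto (fun t : ℝ => x + t • w) (𝓝 0) (𝓝 x) :=
  (by fun_prop : Continuous fun t : ℝ => x + t • w).tendsto' 0 x (by simp)

namespace Net

variable {L : ℕ} {n : ℕ → ℕ} (N : Net L n)

lemma continuous_hid (k : ℕ) (i : Fin (n k)) : Continuous fun y : Input n => N.hid y k i := by
  induction k with
  | zero => exact (continuous_apply i).comp (PiLp.continuous_ofLp 2 _)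
  | succ k ih =>
    simp only [hid, Matrix.mulVec, dotProduct]
    fun_prop

lemma continuous_preact (k : ℕ) (j : Fin (n (k+1))) :
    Continuous fun y : Input n => N.preact y k j := by
  have := N.continuous_hid k
  simp only [preact, Matrix.mulVec, dotProduct]
  fun_prop

lemma shid_eq_hid_s16 {s : Pat n} {y : Input n} {k : ℕ} (hpat : IsPattern k s)
    (hcomp : PatCompatible k (N.Hpat y) s) : N.shid s y k = N.hid y k := by
  induction k with
  | zero => rfl
  | succ k ih =>
    funext j
    have hk : k < k + 1 := k.lt_succ_self
    have hpre : (N.W k).mulVec (N.shid s y k) j + N.b k j = N.preact y k j := by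
      rw [ih (hpat.mono hk.le) (hcomp.mono hk.le)]; rfl
    simp only [shid, hid, hpre]
    exact (max_eq_mul_of_compatible (hpat k hk j) (hcomp k hk j)).symm

lemma spreact_eq_preact {s : Pat n} {y : Input n} (hs : s ∈ N.SC y) {k : ℕ} (hk : k ≤ L)
    (j : Fin (n (k+1))) : N.spreact s y k j = N.preact y k j := by
  rw [spreact, N.shid_eq_hid_s16 (hs.1.mono hk) (hs.2.mono hk)]; rfl

lemma spreact_sub_spreact (s : Pat n) (y x : Input n) (k : ℕ) :
    (fun j => N.spreact s y k j - N.spreact s x k j) = (N.sMat s k).mulVec (y - x).ofLp := by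
  induction k with
  | zero =>
    funext j
    simp [spreact, shid, sMat, Matrix.mulVec_sub]
  | succ k ih =>
    have hshid : N.shid s y (k+1) - N.shid s x (k+1)
        = (Matrix.diagonal (s k)).mulVec (fun j => N.spreact s y k j - N.spreact s x k j) := by
      funext j; simp only [Pi.sub_apply, shid, spreact, Matrix.mulVec_diagonal]; ring
    funext j
    have := congrFun (congrArg (N.W (k+1)).mulVec hshid) j
    simp only [Matrix.mulVec_sub, Pi.sub_apply] at this
    rw [ih, Matrix.mulVec_mulVec, Matrix.mulVec_mulVec] at this
    simpa [spreact, sMat] using this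

lemma inner_nvec (s : Pat n) (p : Idx n) (v : Input n) :
    ⟪N.nvec s p, v⟫ = (N.sMat s p.1).mulVec v.ofLp p.2 := by
  simp [nvec, PiLp.inner_apply, Matrix.mulVec, dotProduct, mul_comm]

lemma spreact_eq_add_inner (s : Pat n) (x y : Input n) (p : Idx n) :
    N.spreact s y p.1 p.2 = N.spreact s x p.1 p.2 + ⟪N.nvec s p, y - x⟫ := by
  rw [inner_nvec, ← N.spreact_sub_spreact]; ring

lemma preact_eq_zero_of_critical {x : Input n} {p : Idx n} (hp : N.Critical x p) :
    N.preact x p.1 p.2 = 0 := by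
  by_contra hne
  have hsign : ∀ᶠ y in 𝓝 x, Real.sign (N.preact y p.1 p.2) = Real.sign (N.preact x p.1 p.2) := by
    have hcont := (N.continuous_preact p.1 p.2).tendsto x
    rcases lt_or_gt_of_ne hne with hneg | hpos
    · filter_upwards [hcont.eventually_lt_const hneg] with y hy
      rw [Real.sign_of_neg hy, Real.sign_of_neg hneg]
    · filter_upwards [hcont.eventually_const_lt hpos] with y hy
      rw [Real.sign_of_pos hy, Real.sign_of_pos hpos]
  obtain ⟨ε, hε, hball⟩ := Metric.eventually_nhds_iff.mp hsign
  obtain ⟨y, z, hy, hz, hyz⟩ := hp.2 ε hε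
  exact hyz ((hball hy).trans (hball hz).symm)

lemma eventually_Hpat_eq_of_not_critical (x : Input n) :
    ∀ᶠ y in 𝓝 x, ∀ q : Idx n, q.1 < L → ¬ N.Critical x q →
      N.Hpat y q.1 q.2 = N.Hpat x q.1 q.2 := by
  refine eventually_forall_fst_lt fun q hq => ?_
  by_cases hc : N.Critical x q
  · exact Eventually.of_forall fun _ h => absurd hc h
  · simp only [Critical, hq, true_and, not_forall, not_exists, not_and, not_not] at hc
    obtain ⟨ε, hε, hconst⟩ := hc
    filter_upwards [ball_mem_nhds x hε] with y hy _
    exact hconst y x hy (dist_self x ▸ hε)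

/-- The cone of directions at `x` into the closed activation region of `s`. -/
def InFeasibleCone (x : Input n) (s : Pat n) (v : Input n) : Prop :=
  ∀ q : Idx n, N.Critical x q → 0 ≤ ⟪v, N.onvec s q⟫

variable {N} in
lemma InFeasibleCone.smul {x : Input n} {s : Pat n} {v : Input n} (hv : N.InFeasibleCone x s v)
    {c : ℝ} (hc : 0 ≤ c) : N.InFeasibleCone x s (c • v) :=
  fun q hq => by rw [real_inner_smul_left]; exact mul_nonneg hc (hv q hq)

variable {N} in
lemma IsAxis.inFeasibleCone {x : Input n} {s : Pat n} {p : Idx n} {w : Input n}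
    (hw : N.IsAxis x s p w) : N.InFeasibleCone x s w :=
  fun q hq => by rw [hw q hq]; split_ifs <;> norm_num

lemma inner_onvec (s : Pat n) (p : Idx n) (v : Input n) :
    ⟪v, N.onvec s p⟫ = if s p.1 p.2 = 1 then ⟪v, N.nvec s p⟫ else -⟪v, N.nvec s p⟫ := by
  unfold onvec; split_ifs <;> simp [inner_neg_right]

lemma onvec_eq_zero_iff (s : Pat n) (p : Idx n) : N.onvec s p = 0 ↔ N.nvec s p = 0 := by
  unfold onvec; split_ifs <;> simp

/-- Induction over the layers: once the earlier layers follow `s`, the pre-activation of a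
critical neuron is the affine function `⟪nvec s q, y - x⟫`, whose sign `InFeasibleCone` controls. -/
lemma mem_SC_of_inFeasibleCone {x y : Input n} {s : Pat n} (hs : s ∈ N.SC x)
    (hnc : ∀ q : Idx n, q.1 < L → ¬ N.Critical x q → N.Hpat y q.1 q.2 = N.Hpat x q.1 q.2)
    (hy : N.InFeasibleCone x s (y - x)) : s ∈ N.SC y := by
  suffices ∀ k ≤ L, PatCompatible k (N.Hpat y) s from ⟨hs.1, this L le_rfl⟩
  intro k
  induction k with
  | zero => exact fun _ _ h => absurd h (Nat.not_lt_zero _)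
  | succ k ih =>
    intro hk
    have hkL : k < L := hk
    have hcomp := ih hkL.le
    have hlayer : ∀ j, N.Hpat y k j * (s k j - 1/2) ≥ 0 := by
      intro j
      by_cases hc : N.Critical x ⟨k, j⟩
      · have hpre : N.preact y k j = ⟪N.nvec s ⟨k, j⟩, y - x⟫ := by
          have := N.spreact_eq_add_inner s x y ⟨k, j⟩
          rwa [N.spreact_eq_preact hs hkL.le, N.preact_eq_zero_of_critical hc, zero_add,
            spreact, N.shid_eq_hid_s16 (hs.1.mono hkL.le) hcomp] at this
        rw [Hpat, hpre, real_inner_comm]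
        have hfeas := hy _ hc
        rw [inner_onvec] at hfeas
        exact sign_mul_sub_half_nonneg (hs.1 k hkL j) hfeas
      · rw [hnc ⟨k, j⟩ hkL hc]
        exact hs.2 k hkL j
    intro k' hk' j
    rcases (Nat.lt_succ_iff_lt_or_eq.mp hk') with hlt | rfl
    · exact hcomp k' hlt j
    · exact hlayer j

lemma continuous_fnet (h1 : n (L+1) = 1) : Continuous (N.fnet h1) :=
  N.continuous_preact L _

lemma fnet_sub_fnet (h1 : n (L+1) = 1) {x y : Input n} {s : Pat n}
    (hsx : s ∈ N.SC x) (hsy : s ∈ N.SC y) :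
    N.fnet h1 y - N.fnet h1 x = ⟪y - x, N.grad h1 s⟫ := by
  have := N.spreact_eq_add_inner s x y ⟨L, Fin.cast h1.symm 0⟩
  rw [N.spreact_eq_preact hsx le_rfl, N.spreact_eq_preact hsy le_rfl] at this
  rw [fnet, fnet, grad, this, real_inner_comm]
  ring

lemma mem_SC_add_smul {x : Input n} {s : Pat n} (hs : s ∈ N.SC x) {w : Input n}
    (hw : N.InFeasibleCone x s w) : ∀ᶠ t in 𝓝[>] (0 : ℝ), s ∈ N.SC (x + t • w) := by
  filter_upwards [(tendsto_add_smul x w).mono_left nhdsWithin_le_nhds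
    (N.eventually_Hpat_eq_of_not_critical x), self_mem_nhdsWithin] with t hnc ht
  exact N.mem_SC_of_inFeasibleCone hs hnc (by simpa using hw.smul ht.le)

lemma fnet_add_smul (h1 : n (L+1) = 1) {x : Input n} {s : Pat n} (hs : s ∈ N.SC x)
    {w : Input n} (hw : N.InFeasibleCone x s w) :
    ∀ᶠ t in 𝓝[>] (0 : ℝ), N.fnet h1 (x + t • w) = N.fnet h1 x + t * ⟪w, N.grad h1 s⟫ := by
  filter_upwards [N.mem_SC_add_smul hs hw] with t ht
  rw [← sub_eq_iff_eq_add', N.fnet_sub_fnet h1 hs ht, add_sub_cancel_left, real_inner_smul_left]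

lemma inner_grad_eq_of_inFeasibleCone (h1 : n (L+1) = 1) {x : Input n} {s s' : Pat n}
    (hs : s ∈ N.SC x) (hs' : s' ∈ N.SC x) {w : Input n} (hw : N.InFeasibleCone x s w)
    (hw' : N.InFeasibleCone x s' w) : ⟪w, N.grad h1 s⟫ = ⟪w, N.grad h1 s'⟫ := by
  obtain ⟨t, ht, ht', htpos⟩ := ((N.fnet_add_smul h1 hs hw).and
    ((N.fnet_add_smul h1 hs' hw').and self_mem_nhdsWithin)).exists
  exact mul_left_cancel₀ (ne_of_gt htpos) (add_left_cancel (ht.symm.trans ht'))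

lemma sCritical_of_spreact_eq_zero {x : Input n} {s : Pat n} {p : Idx n} (hL : p.1 < L)
    (h0 : N.spreact s x p.1 p.2 = 0) (hv : N.nvec s p ≠ 0) : N.sCritical s x p := by
  refine ⟨hL, fun ε hε => ?_⟩
  obtain ⟨t, hball, htpos⟩ := ((((tendsto_add_smul x (N.nvec s p)).mono_left
    nhdsWithin_le_nhds).eventually_mem (ball_mem_nhds x hε)).and
    (self_mem_nhdsWithin (s := Set.Ioi 0))).exists
  refine ⟨x + t • N.nvec s p, x, hball, by simpa using hε, ?_⟩
  have hpos : 0 < N.spreact s (x + t • N.nvec s p) p.1 p.2 := by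
    rw [N.spreact_eq_add_inner s x, h0, add_sub_cancel_left, real_inner_smul_right,
      real_inner_self_eq_norm_sq, zero_add]
    exact mul_pos htpos (by positivity)
  simp [sHpat, h0, Real.sign_of_pos hpos]

lemma sCritical_of_critical {x : Input n} {s : Pat n} (hs : s ∈ N.SC x) {p : Idx n}
    (hp : N.Critical x p) (hv : N.nvec s p ≠ 0) : N.sCritical s x p :=
  N.sCritical_of_spreact_eq_zero hp.1
    (by rw [N.spreact_eq_preact hs hp.1.le, N.preact_eq_zero_of_critical hp]) hv

lemma eq_zero_of_mem_KerC {x : Input n} (hvx : N.IsVertex x) {v : Input n}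
    (hv : v ∈ N.KerC x) : v = 0 := by
  have hbot : Submodule.span ℝ (N.KerC x) = ⊥ := Submodule.finrank_eq_zero.mp hvx
  simpa [hbot] using Submodule.subset_span (R := ℝ) hv

/-- A direction orthogonal to all critical normals leaves every hyperplane pattern unchanged,
so it lies in `Ker^C(x)`. -/
lemma eq_zero_of_inner_nvec_eq_zero {x : Input n} (hvx : N.IsVertex x) {s : Pat n}
    (hs : s ∈ N.SC x) {v : Input n} (hv : ∀ q : Idx n, N.Critical x q → ⟪v, N.nvec s q⟫ = 0) :
    v = 0 := by
  refine N.eq_zero_of_mem_KerC hvx ?_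
  have hstable : ∀ᶠ t in 𝓝 (0 : ℝ), ∀ q : Idx n, q.1 < L →
      N.Hpat (x + t • v) q.1 q.2 = N.Hpat x q.1 q.2 := by
    filter_upwards [tendsto_add_smul x v (N.eventually_Hpat_eq_of_not_critical x)] with t hnc q hq
    by_cases hc : N.Critical x q
    · have hperp : ⟪t • v, N.nvec s q⟫ = 0 := by rw [real_inner_smul_left, hv q hc, mul_zero]
      have hst : s ∈ N.SC (x + t • v) := N.mem_SC_of_inFeasibleCone hs hnc fun r hr => by
        rw [add_sub_cancel_left, inner_onvec, real_inner_smul_left, hv r hr, mul_zero]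
        split_ifs <;> simp
      rw [Hpat, Hpat, ← N.spreact_eq_preact hst hq.le, ← N.spreact_eq_preact hs hq.le,
        N.spreact_eq_add_inner s x, add_sub_cancel_left, real_inner_comm, hperp, add_zero]
    · exact hnc q hq hc
  obtain ⟨ε, hε, hball⟩ := Metric.eventually_nhds_iff.mp hstable
  exact ⟨ε, hε, fun t ht => hball (by rwa [Real.dist_0_eq_abs])⟩

def actPattern (y : Input n) : Pat n := fun k j => if 0 < N.preact y k j then 1 else 0

lemma actPattern_isPattern (y : Input n) : IsPattern L (N.actPattern y) :=
  fun _ _ _ => by unfold actPattern; split_ifs <;> simp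

lemma actPattern_mem_SC (y : Input n) : N.actPattern y ∈ N.SC y := by
  refine ⟨N.actPattern_isPattern y, fun k _ j => ?_⟩
  rcases lt_trichotomy (N.preact y k j) 0 with h | h | h
  · simp [Hpat, actPattern, Real.sign_of_neg h, not_lt.mpr h.le]
  · simp [Hpat, h]
  · norm_num [Hpat, actPattern, Real.sign_of_pos h, h]

lemma eventually_actPattern_mem_SC (x : Input n) : ∀ᶠ y in 𝓝 x, N.actPattern y ∈ N.SC x := by
  suffices ∀ᶠ y in 𝓝 x, ∀ q : Idx n, q.1 < L →
      N.Hpat x q.1 q.2 * (N.actPattern y q.1 q.2 - 1/2) ≥ 0 from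
    this.mono fun y hy => ⟨N.actPattern_isPattern y, fun k hk j => hy ⟨k, j⟩ hk⟩
  refine eventually_forall_fst_lt fun q _ => ?_
  have hcont := (N.continuous_preact q.1 q.2).tendsto x
  rcases lt_trichotomy (N.preact x q.1 q.2) 0 with h | h | h
  · filter_upwards [hcont.eventually_lt_const h] with y hy
    simp [Hpat, actPattern, Real.sign_of_neg h, not_lt.mpr hy.le]
  · exact Eventually.of_forall fun y => by simp [Hpat, h]
  · filter_upwards [hcont.eventually_const_lt h] with y hy
    norm_num [Hpat, actPattern, Real.sign_of_pos h, hy]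

lemma sub_inFeasibleCone_actPattern {x y : Input n} (hsx : N.actPattern y ∈ N.SC x) :
    N.InFeasibleCone x (N.actPattern y) (y - x) := by
  intro q hq
  have hpre : ⟪y - x, N.nvec (N.actPattern y) q⟫ = N.preact y q.1 q.2 := by
    have := N.spreact_eq_add_inner (N.actPattern y) x y q
    rw [N.spreact_eq_preact (N.actPattern_mem_SC y) hq.1.le,
      N.spreact_eq_preact hsx hq.1.le, N.preact_eq_zero_of_critical hq, zero_add] at this
    rw [real_inner_comm, this]
  rw [inner_onvec, hpre]
  by_cases h : 0 < N.preact y q.1 q.2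
  · simp [actPattern, h, h.le]
  · simpa [actPattern, h] using not_lt.mp h

abbrev CriticalIdx (x : Input n) (s : Pat n) : Type :=
  {q : Idx n // N.Critical x q ∧ N.nvec s q ≠ 0}

lemma linearIndependent_onvec {x : Input n} (hreg : N.RegularPoint x) {s : Pat n}
    (hs : s ∈ N.SC x) :
    LinearIndependent ℝ fun q : N.CriticalIdx x s => N.onvec s q.1 := by
  let toSCritical : N.CriticalIdx x s →
      {p : Idx n // N.sCritical s x p} := fun q => ⟨q.1, N.sCritical_of_critical hs q.2.1 q.2.2⟩
  have hnvec : LinearIndependent ℝ fun q : N.CriticalIdx x s => N.nvec s q.1 :=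
    (hreg s hs).comp toSCritical fun q r h => Subtype.ext (congrArg Subtype.val h :)
  have horient : (fun q : N.CriticalIdx x s => N.onvec s q.1) =
      (fun q : N.CriticalIdx x s => if s q.1.1 q.1.2 = 1 then (1 : ℝˣ) else -1) •
        fun q => N.nvec s q.1 := by
    funext q
    by_cases h : s q.1.1 q.1.2 = 1 <;> simp [onvec, h]
  exact horient ▸ hnvec.units_smul _

lemma span_onvec_eq_top {x : Input n} (hvx : N.IsVertex x) {s : Pat n} (hs : s ∈ N.SC x) :
    Submodule.span ℝ (Set.range fun q : N.CriticalIdx x s => N.onvec s q.1) = ⊤ := by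
  refine Submodule.orthogonal_eq_bot_iff.mp (Submodule.eq_bot_iff _ |>.mpr fun v hv => ?_)
  refine N.eq_zero_of_inner_nvec_eq_zero hvx hs fun q hq => ?_
  by_cases hq0 : N.nvec s q = 0
  · rw [hq0, inner_zero_right]
  · have h := (Submodule.mem_orthogonal' _ v).mp hv _
      (Submodule.subset_span ⟨⟨q, hq, hq0⟩, rfl⟩)
    rw [inner_onvec] at h
    split_ifs at h <;> linarith

instance (x : Input n) (s : Pat n) : Finite (N.CriticalIdx x s) :=
  Set.Finite.to_subtype ((finite_setOf_fst_lt L n).subset fun _ hq => hq.1.1)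

instance (x : Input n) (s : Pat n) : Fintype (N.CriticalIdx x s) := Fintype.ofFinite _

lemma exists_axes {x : Input n} (hreg : N.RegularPoint x) (hvx : N.IsVertex x) {s : Pat n}
    (hs : s ∈ N.SC x) :
    ∃ a : N.CriticalIdx x s → Input n, (∀ q, N.IsAxis x s q.1 (a q)) ∧
      ∀ u v : Input n, ⟪u, v⟫ = ∑ q, ⟪u, N.onvec s q.1⟫ * ⟪a q, v⟫ := by
  let b := Module.Basis.mk (N.linearIndependent_onvec hreg hs) (N.span_onvec_eq_top hvx hs).ge
  have hb : ∀ q, b q = N.onvec s q.1 := Module.Basis.mk_apply _ _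
  obtain ⟨a, hdual, hexp⟩ := b.exists_inner_dual
  refine ⟨a, fun q r hr => ?_, by simpa only [hb] using hexp⟩
  by_cases hr0 : N.nvec s r = 0
  · rw [(N.onvec_eq_zero_iff s r).mpr hr0, inner_zero_right, if_neg]
    rintro rfl
    exact q.2.2 hr0
  · rw [← hb ⟨r, hr, hr0⟩, hdual]
    simp only [Subtype.ext_iff, eq_comm]

lemma inner_grad_nonneg_of_isLocalMin (h1 : n (L+1) = 1) {x : Input n}
    (hmin : IsLocalMin (N.fnet h1) x) {s : Pat n} (hs : s ∈ N.SC x) {w : Input n}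
    (hw : N.InFeasibleCone x s w) : 0 ≤ ⟪w, N.grad h1 s⟫ := by
  obtain ⟨t, hray, hle, htpos⟩ := ((N.fnet_add_smul h1 hs hw).and
    ((((tendsto_add_smul x w).mono_left nhdsWithin_le_nhds).eventually hmin).and
      self_mem_nhdsWithin)).exists
  rw [hray, le_add_iff_nonneg_right] at hle
  exact (mul_nonneg_iff_of_pos_left htpos).mp hle

lemma exists_axis_of_isLocalMin (h1 : n (L+1) = 1) {x : Input n}
    (hmin : IsLocalMin (N.fnet h1) x) {w : Input n} (hw : w ∈ N.RegionSepAxes x) :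
    ∃ s ∈ N.SC x, ∃ p : Idx n, N.sCritical s x p ∧ N.IsAxis x s p w ∧ ⟪w, N.grad h1 s⟫ ≥ 0 := by
  obtain ⟨s, hs, p, hp, haxis⟩ := hw
  have hnv : N.nvec s p ≠ 0 := fun h0 => by
    simpa [(N.onvec_eq_zero_iff s p).mpr h0] using haxis p hp
  exact ⟨s, hs, p, N.sCritical_of_critical hs hp hnv, haxis,
    N.inner_grad_nonneg_of_isLocalMin h1 hmin hs haxis.inFeasibleCone⟩

lemma isLocalMin_of_forall_axes (h1 : n (L+1) = 1) {x : Input n} (hreg : N.RegularPoint x)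
    (hvx : N.IsVertex x)
    (hax : ∀ w ∈ N.RegionSepAxes x, ∃ s ∈ N.SC x, ∃ p : Idx n,
      N.sCritical s x p ∧ N.IsAxis x s p w ∧ ⟪w, N.grad h1 s⟫ ≥ 0) :
    IsLocalMin (N.fnet h1) x := by
  filter_upwards [N.eventually_actPattern_mem_SC x] with y hsx
  obtain ⟨a, haxis, hexp⟩ := N.exists_axes hreg hvx hsx
  have hslope : ∀ q, 0 ≤ ⟪a q, N.grad h1 (N.actPattern y)⟫ := fun q => by
    obtain ⟨s', hs', _, -, haxis', hnonneg⟩ := hax (a q) ⟨_, hsx, q.1, q.2.1, haxis q⟩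
    rw [N.inner_grad_eq_of_inFeasibleCone h1 hsx hs' (haxis q).inFeasibleCone haxis'.inFeasibleCone]
    exact hnonneg
  rw [← sub_nonneg, N.fnet_sub_fnet h1 hsx (N.actPattern_mem_SC y), hexp]
  exact Finset.sum_nonneg fun q _ =>
    mul_nonneg (N.sub_inFeasibleCone_actPattern hsx q.1 q.2.1) (hslope q)

end Net

/-- Proposition 1: a regular vertex `x` is a local minimum of `f`, i.e.
`∃ ε > 0, f(x) = inf {f(y) : y ∈ B_ε(x)}`, if and only if every region separating axis
`a ∈ 𝒜(x)` can be written as `a = ã_{x,s,l,j}` for some `s ∈ S^C(x)` and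
`(l,j) ∈ C̃_s(x)` with `⟨ã_{x,s,l,j}, ∇_s⟩ ≥ 0`. -/
theorem statement16 {L : ℕ} {n : ℕ → ℕ} (N : Net L n) (h1 : n (L+1) = 1) (x : Input n)
    (hreg : N.RegularPoint x) (hvx : N.IsVertex x) :
    (∃ ε > 0, N.fnet h1 x = sInf ((fun y => N.fnet h1 y) '' ball x ε)) ↔
      ∀ w ∈ N.RegionSepAxes x,
        ∃ s ∈ N.SC x, ∃ p : Idx n,
          N.sCritical s x p ∧ N.IsAxis x s p w ∧ ⟪w, N.grad h1 s⟫ ≥ 0 := by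
  refine (isLocalMin_iff_exists_eq_sInf_image_ball (N.continuous_fnet h1)).symm.trans ?_
  exact ⟨fun hmin _ hw => N.exists_axis_of_isLocalMin h1 hmin hw,
    N.isLocalMin_of_forall_axes h1 hreg hvx⟩

end DRLP
end
end
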